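/- arXiv:2512.24779 — 6 statements merged into one kernel-verified Lean document; each statement's English description precedes it below -/
import Mathlib

section
/- For every m > 0 and ρ ∈ (0,1), the function y ↦ H((m,ρ),y) is twice differentiable on (0, 1/(1−ρ)) with H''((m,ρ),y) = (1/(2m))·[ 1/(1+2m−(1−ρ)y) − 1/(1−(1−ρ)y) ], and H''((m,ρ),y) < 0 for every y ∈ (0, 1/(1−ρ)); consequently H((m,ρ),·) is strictly concave on [0, 1/(1−ρ)]. -/
open Real Filter Set Topology

/-- Telescoping sum `∑ 1/((l+1)(l+2)) = 1`. -/
lemma tele_hasSum : HasSum (fun l : ℕ => 1/(((l:ℝ)+1)*((l:ℝ)+2))) 1 := by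
  have hnn : ∀ i : ℕ, (0:ℝ) ≤ 1/(((i:ℝ)+1)*((i:ℝ)+2)) := by
    intro i; positivity
  rw [hasSum_iff_tendsto_nat_of_nonneg hnn]
  have hps : ∀ n : ℕ, ∑ i ∈ Finset.range n, 1/(((i:ℝ)+1)*((i:ℝ)+2)) = 1 - 1/((n:ℝ)+1) := by
    intro n
    induction n with
    | zero => simp
    | succ k ih =>
      rw [Finset.sum_range_succ, ih]
      have h1 : ((k:ℝ)+1) ≠ 0 := by positivity
      have h2 : ((k:ℝ)+2) ≠ 0 := by positivity
      push_cast
      field_simp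
      ring
  simp only [hps]
  have := tendsto_one_div_add_atTop_nhds_zero_nat (𝕜 := ℝ)
  simpa using tendsto_const_nhds.sub this

/-- The power series `∑ x^{l+2}/((l+1)(l+2)) = x + (1-x)log(1-x)` for `x ∈ [0,1]`. -/
lemma phi_hasSum {x : ℝ} (h0 : 0 ≤ x) (h1 : x ≤ 1) :
    HasSum (fun l : ℕ => x^(l+2)/(((l:ℝ)+1)*((l:ℝ)+2))) (x + (1-x)*Real.log (1-x)) := by
  rcases eq_or_lt_of_le h1 with rfl | h1
  · simpa using tele_hasSum
  · have hx : |x| < 1 := abs_lt.2 ⟨by linarith, h1⟩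
    have h := Real.hasSum_pow_div_log_of_abs_lt_one hx
    have hA := h.mul_left x
    have hB : HasSum (fun n : ℕ => x^(n+2)/((n:ℝ)+2)) (-Real.log (1-x) - x) := by
      have h' : HasSum (fun n : ℕ => x^(n+1)/((n:ℝ)+1))
          ((-Real.log (1-x) - x) + ∑ i ∈ Finset.range 1, x^(i+1)/((i:ℝ)+1)) := by
        convert h using 1
        simp
      have h'' := (hasSum_nat_add_iff (f := fun n : ℕ => x^(n+1)/((n:ℝ)+1)) 1).mpr h'
      convert h'' using 2 with n
      · rfl
      push_cast
      ring
    have key : ∀ n : ℕ, x^(n+2)/(((n:ℝ)+1)*((n:ℝ)+2))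
        = x*(x^(n+1)/((n:ℝ)+1)) - x^(n+2)/((n:ℝ)+2) := by
      intro n
      have hn1 : ((n:ℝ)+1) ≠ 0 := by positivity
      have hn2 : ((n:ℝ)+2) ≠ 0 := by positivity
      field_simp
      ring
    simp only [key]
    convert hA.sub hB using 1
    · rfl
    ring

/-- The function `H((m,ρ),y)` from the paper. -/
noncomputable def H (m ρ y : ℝ) : ℝ :=
  -(y / (2*m)) * ((1/(1-ρ)) * Real.log ((1+2*m)/(1+2*m/ρ)) +
    ∑' l : ℕ, (1 - ((1+2*m)⁻¹)^(l+1)) * (1-ρ)^l * y^(l+1) / (((l:ℝ)+1) * ((l:ℝ)+2)))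

/-- Closed form for `H`. -/
noncomputable def Hc (m ρ y : ℝ) : ℝ :=
  -(y / (2*m)) * ((1/(1-ρ)) * Real.log ((1+2*m)/(1+2*m/ρ)))
  - (1/(2*m*(1-ρ)^2)) *
    ((1-(1-ρ)*y) * Real.log (1-(1-ρ)*y)
     - (1+2*m-(1-ρ)*y) * Real.log (1+2*m-(1-ρ)*y)
     + (1+2*m-(1-ρ)*y) * Real.log (1+2*m))

/-- First derivative of `Hc`. -/
noncomputable def Hc' (m ρ y : ℝ) : ℝ :=
  -((1/(1-ρ)) * Real.log ((1+2*m)/(1+2*m/ρ))) / (2*m)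
  - (1/(2*m*(1-ρ)^2)) *
    ((Real.log (1-(1-ρ)*y) + 1) * (-(1-ρ))
     - (Real.log (1+2*m-(1-ρ)*y) + 1) * (-(1-ρ))
     + (-(1-ρ)) * Real.log (1+2*m))

private lemma HasDerivAt.congr' {f g : ℝ → ℝ} {f' g' : ℝ} {x : ℝ}
    (h : HasDerivAt f f' x) (hfg : ∀ y, g y = f y) (h' : g' = f') :
    HasDerivAt g g' x := by
  have : g = f := funext hfg
  rw [this, h']
  exact h

lemma hasDerivAt_Hc (m ρ y : ℝ) (h1 : 1-(1-ρ)*y ≠ 0) (h2 : 1+2*m-(1-ρ)*y ≠ 0) :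
    HasDerivAt (Hc m ρ) (Hc' m ρ y) y := by
  have hA : HasDerivAt (fun y : ℝ => 1-(1-ρ)*y) (-(1-ρ)) y := by
    simpa using ((hasDerivAt_id y).const_mul (1-ρ)).const_sub 1
  have hB : HasDerivAt (fun y : ℝ => 1+2*m-(1-ρ)*y) (-(1-ρ)) y := by
    simpa using ((hasDerivAt_id y).const_mul (1-ρ)).const_sub (1+2*m)
  have hU : HasDerivAt (fun y : ℝ => (1-(1-ρ)*y) * Real.log (1-(1-ρ)*y))
      ((Real.log (1-(1-ρ)*y) + 1) * (-(1-ρ))) y :=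
    HasDerivAt.comp (h₂ := fun u => u * Real.log u) y (Real.hasDerivAt_mul_log h1) hA
  have hV : HasDerivAt (fun y : ℝ => (1+2*m-(1-ρ)*y) * Real.log (1+2*m-(1-ρ)*y))
      ((Real.log (1+2*m-(1-ρ)*y) + 1) * (-(1-ρ))) y :=
    HasDerivAt.comp (h₂ := fun u => u * Real.log u) y (Real.hasDerivAt_mul_log h2) hB
  have hW : HasDerivAt (fun y : ℝ => (1+2*m-(1-ρ)*y) * Real.log (1+2*m))
      ((-(1-ρ)) * Real.log (1+2*m)) y := hB.mul_const _
  have hL : HasDerivAt (fun y : ℝ => -(y / (2*m)) *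
      ((1/(1-ρ)) * Real.log ((1+2*m)/(1+2*m/ρ))))
      (-((1/(1-ρ)) * Real.log ((1+2*m)/(1+2*m/ρ))) / (2*m)) y := by
    refine HasDerivAt.congr' ((hasDerivAt_id' (𝕜 := ℝ) y).mul_const
      (-(((1/(1-ρ)) * Real.log ((1+2*m)/(1+2*m/ρ))) / (2*m)))) (fun z => by ring) (by ring)
  refine HasDerivAt.congr' (hL.sub ((((hU.sub hV).add hW)).const_mul (1/(2*m*(1-ρ)^2))))
    (fun z => by simp only [Hc, Pi.sub_apply, Pi.add_apply]) (by simp only [Hc'])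

lemma hasDerivAt_Hc' (m ρ y : ℝ) (hm : 0 < m) (hρ : 0 < 1-ρ)
    (h1 : 0 < 1-(1-ρ)*y) (h2 : 0 < 1+2*m-(1-ρ)*y) :
    HasDerivAt (Hc' m ρ) ((1/(2*m)) * (1/(1+2*m-(1-ρ)*y) - 1/(1-(1-ρ)*y))) y := by
  have hA : HasDerivAt (fun y : ℝ => 1-(1-ρ)*y) (-(1-ρ)) y := by
    simpa using ((hasDerivAt_id y).const_mul (1-ρ)).const_sub 1
  have hB : HasDerivAt (fun y : ℝ => 1+2*m-(1-ρ)*y) (-(1-ρ)) y := by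
    simpa using ((hasDerivAt_id y).const_mul (1-ρ)).const_sub (1+2*m)
  have hL1 : HasDerivAt (fun y : ℝ => Real.log (1-(1-ρ)*y))
      ((1-(1-ρ)*y)⁻¹ * (-(1-ρ))) y := HasDerivAt.comp (h₂ := Real.log) y (Real.hasDerivAt_log h1.ne') hA
  have hL2 : HasDerivAt (fun y : ℝ => Real.log (1+2*m-(1-ρ)*y))
      ((1+2*m-(1-ρ)*y)⁻¹ * (-(1-ρ))) y := HasDerivAt.comp (h₂ := Real.log) y (Real.hasDerivAt_log h2.ne') hB
  have hIn : HasDerivAt (fun y : ℝ =>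
      ((Real.log (1-(1-ρ)*y) + 1) * (-(1-ρ))
       - (Real.log (1+2*m-(1-ρ)*y) + 1) * (-(1-ρ))
       + (-(1-ρ)) * Real.log (1+2*m)))
      (((1-(1-ρ)*y)⁻¹ * (-(1-ρ))) * (-(1-ρ))
       - ((1+2*m-(1-ρ)*y)⁻¹ * (-(1-ρ))) * (-(1-ρ))) y := by
    simpa using (((hL1.add_const 1).mul_const (-(1-ρ))).sub
      ((hL2.add_const 1).mul_const (-(1-ρ)))).add_const ((-(1-ρ)) * Real.log (1+2*m))
  refine HasDerivAt.congr' ((hasDerivAt_const y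
      (-((1/(1-ρ)) * Real.log ((1+2*m)/(1+2*m/ρ))) / (2*m))).sub
      (hIn.const_mul (1/(2*m*(1-ρ)^2))))
    (fun z => by simp only [Hc', Pi.sub_apply]) ?_
  field_simp
  ring

lemma H_eq_Hc {m ρ : ℝ} (hm : 0 < m) (hρ0 : 0 < ρ) (hρ1 : ρ < 1) :
    Set.EqOn (H m ρ) (Hc m ρ) (Set.Icc 0 (1/(1-ρ))) := by
  have hq : 0 < 1-ρ := by linarith
  have hb : (0:ℝ) < 1+2*m := by linarith
  intro y hy
  obtain ⟨hy0, hy1⟩ := hy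
  rcases eq_or_lt_of_le hy0 with rfl | hy0
  · simp [H, Hc]
  · have hqy1 : (1-ρ)*y ≤ 1 := by
      rw [mul_comm]
      exact (le_div_iff₀ hq).mp hy1
    have hqy0 : 0 ≤ (1-ρ)*y := by positivity
    have hs1 := phi_hasSum hqy0 hqy1
    have hs2 : HasSum (fun l : ℕ => ((1-ρ)*y/(1+2*m))^(l+2)/(((l:ℝ)+1)*((l:ℝ)+2)))
        ((1-ρ)*y/(1+2*m) + (1-(1-ρ)*y/(1+2*m))*Real.log (1-(1-ρ)*y/(1+2*m))) := by
      refine phi_hasSum (by positivity) ?_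
      rw [div_le_one hb]; linarith
    have hyne : y ≠ 0 := hy0.ne'
    have hqne : (1-ρ) ≠ 0 := hq.ne'
    have hbne : (1+2*m) ≠ 0 := hb.ne'
    have hsum : HasSum (fun l : ℕ =>
        (1 - ((1+2*m)⁻¹)^(l+1)) * (1-ρ)^l * y^(l+1) / (((l:ℝ)+1) * ((l:ℝ)+2)))
        ((1/((1-ρ)^2*y)) * ((((1-ρ)*y) + (1-(1-ρ)*y)*Real.log (1-(1-ρ)*y))
          - (1+2*m)*(((1-ρ)*y/(1+2*m))
            + (1-(1-ρ)*y/(1+2*m))*Real.log (1-(1-ρ)*y/(1+2*m))))) := by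
      have h := (hs1.sub (hs2.mul_left (1+2*m))).mul_left (1/((1-ρ)^2*y))
      have key : ∀ l : ℕ,
          (1 - ((1+2*m)⁻¹)^(l+1)) * (1-ρ)^l * y^(l+1) / (((l:ℝ)+1) * ((l:ℝ)+2))
          = (1/((1-ρ)^2*y)) * (((1-ρ)*y)^(l+2)/(((l:ℝ)+1)*((l:ℝ)+2))
            - (1+2*m) * (((1-ρ)*y/(1+2*m))^(l+2)/(((l:ℝ)+1)*((l:ℝ)+2)))) := by
        intro l
        have hl1 : ((l:ℝ)+1) ≠ 0 := by positivity
        have hl2 : ((l:ℝ)+2) ≠ 0 := by positivity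
        have hbp : (1+2*m)^(l+2) ≠ 0 := pow_ne_zero _ hbne
        simp only [div_pow, mul_pow, inv_pow]
        field_simp
        ring
      simp only [key]
      exact h
    have hbqy : 0 < 1+2*m-(1-ρ)*y := by linarith
    have hlog : Real.log (1-(1-ρ)*y/(1+2*m))
        = Real.log (1+2*m-(1-ρ)*y) - Real.log (1+2*m) := by
      rw [show 1-(1-ρ)*y/(1+2*m) = (1+2*m-(1-ρ)*y)/(1+2*m) by field_simp]
      exact Real.log_div hbqy.ne' hbne
    simp only [H, Hc, hsum.tsum_eq, hlog]
    field_simp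
    ring

theorem stmt1 (m ρ : ℝ) (hm : 0 < m) (hρ : ρ ∈ Set.Ioo (0:ℝ) 1) :
    (∀ y ∈ Set.Ioo (0:ℝ) (1/(1-ρ)),
      HasDerivAt (deriv (H m ρ))
        ((1/(2*m)) * (1/(1+2*m-(1-ρ)*y) - 1/(1-(1-ρ)*y))) y ∧
      (1/(2*m)) * (1/(1+2*m-(1-ρ)*y) - 1/(1-(1-ρ)*y)) < 0) ∧
    StrictConcaveOn ℝ (Set.Icc 0 (1/(1-ρ))) (H m ρ) := by
  obtain ⟨hρ0, hρ1⟩ := hρ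
  have hq : 0 < 1-ρ := by linarith
  have heq := H_eq_Hc hm hρ0 hρ1
  have hbnd : ∀ z ∈ Set.Ioo (0:ℝ) (1/(1-ρ)),
      0 < 1-(1-ρ)*z ∧ 0 < 1+2*m-(1-ρ)*z := by
    intro z hz
    have h1 : (1-ρ)*z < 1 := by
      rw [mul_comm]
      exact (lt_div_iff₀ hq).mp hz.2
    exact ⟨by linarith, by linarith⟩
  have hmain : ∀ y ∈ Set.Ioo (0:ℝ) (1/(1-ρ)),
      HasDerivAt (deriv (H m ρ))
        ((1/(2*m)) * (1/(1+2*m-(1-ρ)*y) - 1/(1-(1-ρ)*y))) y := by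
    intro y hy
    have hmem : Set.Ioo (0:ℝ) (1/(1-ρ)) ∈ 𝓝 y := isOpen_Ioo.mem_nhds hy
    have hderiv_eq : ∀ z ∈ Set.Ioo (0:ℝ) (1/(1-ρ)), deriv (H m ρ) z = Hc' m ρ z := by
      intro z hz
      obtain ⟨hz1, hz2⟩ := hbnd z hz
      have hmemz : Set.Ioo (0:ℝ) (1/(1-ρ)) ∈ 𝓝 z := isOpen_Ioo.mem_nhds hz
      have hev : H m ρ =ᶠ[𝓝 z] Hc m ρ :=
        Filter.eventuallyEq_of_mem hmemz (fun w hw => heq (Set.Ioo_subset_Icc_self hw))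
      rw [hev.deriv_eq]
      exact (hasDerivAt_Hc m ρ z hz1.ne' hz2.ne').deriv
    have hev2 : deriv (H m ρ) =ᶠ[𝓝 y] Hc' m ρ :=
      Filter.eventuallyEq_of_mem hmem hderiv_eq
    obtain ⟨hy1, hy2⟩ := hbnd y hy
    exact (hasDerivAt_Hc' m ρ y hm hq hy1 hy2).congr_of_eventuallyEq hev2
  have hneg : ∀ y ∈ Set.Ioo (0:ℝ) (1/(1-ρ)),
      (1/(2*m)) * (1/(1+2*m-(1-ρ)*y) - 1/(1-(1-ρ)*y)) < 0 := by
    intro y hy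
    obtain ⟨hy1, hy2⟩ := hbnd y hy
    have hlt : 1/(1+2*m-(1-ρ)*y) < 1/(1-(1-ρ)*y) :=
      one_div_lt_one_div_of_lt hy1 (by linarith)
    have : (0:ℝ) < 1/(2*m) := by positivity
    exact mul_neg_of_pos_of_neg this (by linarith)
  refine ⟨fun y hy => ⟨hmain y hy, hneg y hy⟩, ?_⟩
  have hcont : Continuous (Hc m ρ) := by
    have k1 : Continuous fun y : ℝ => (1-(1-ρ)*y) * Real.log (1-(1-ρ)*y) :=
      Real.continuous_mul_log.comp (by fun_prop)
    have k2 : Continuous fun y : ℝ => (1+2*m-(1-ρ)*y) * Real.log (1+2*m-(1-ρ)*y) :=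
      Real.continuous_mul_log.comp (by fun_prop)
    unfold Hc
    apply Continuous.sub
    · fun_prop
    · exact continuous_const.mul (((k1.sub k2).add (by fun_prop)))
  refine strictConcaveOn_of_deriv2_neg (convex_Icc _ _) (hcont.continuousOn.congr heq) ?_
  intro x hx
  rw [interior_Icc] at hx
  have hd := hmain x hx
  have h2 : deriv^[2] (H m ρ) x = deriv (deriv (H m ρ)) x := rfl
  rw [h2, hd.deriv]
  exact hneg x hx
end

section
/- For every m > 0 and ρ ∈ (0,1), the point y = 1 is the unique maximizer of y ↦ H((m,ρ),y) on [0, 1/(1−ρ)]: for every y ∈ [0, 1/(1−ρ)] with y ≠ 1 one has H((m,ρ),y) < H((m,ρ),1) = η(m,ρ). -/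
open Real Filter Set

/-- η(m,ρ) := H((m,ρ),1). -/
noncomputable def eta (m ρ : ℝ) : ℝ := H m ρ 1

lemma summable_inv_mul : Summable (fun l : ℕ => 1 / (((l:ℝ)+1) * ((l:ℝ)+2))) := by
  have h2 : Summable (fun l : ℕ => 1 / ((l:ℝ)+1)^2) := by
    have := (summable_nat_add_iff (f := fun n : ℕ => 1 / (n : ℝ)^2) 1).2
      (summable_one_div_nat_pow.2 one_lt_two)
    simpa using this
  refine h2.of_nonneg_of_le (fun l => by positivity) (fun l => ?_)
  have h1 : (0:ℝ) < (l:ℝ)+1 := by positivity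
  rw [div_le_div_iff₀ (by positivity) (by positivity)]
  nlinarith [sq_nonneg ((l:ℝ)+1)]

set_option maxHeartbeats 1000000 in
theorem stmt2 (m ρ : ℝ) (hm : 0 < m) (hρ : ρ ∈ Set.Ioo (0:ℝ) 1) :
    ∀ y ∈ Set.Icc (0:ℝ) (1/(1-ρ)), y ≠ 1 → H m ρ y < eta m ρ := by
  obtain ⟨hρ0, hρ1⟩ := hρ
  set x : ℝ := 1 - ρ with hxdef
  have hx0 : 0 < x := by simp [hxdef]; linarith
  have hx1 : x < 1 := by simp [hxdef]; linarith
  set b : ℝ := 1 + 2*m with hbdef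
  have hb1 : 1 < b := by simp [hbdef]; linarith
  have hb0 : 0 < b := by linarith
  have hbinv0 : 0 < b⁻¹ := by positivity
  have hbinv1 : b⁻¹ < 1 := by rw [inv_lt_one_iff₀]; right; exact hb1
  -- the coefficients
  set e : ℕ → ℝ := fun l => (1 - (b⁻¹)^(l+1)) * x^l with hedef
  have he_pos : ∀ l, 0 < e l := by
    intro l
    have h1 : (b⁻¹)^(l+1) < 1 := pow_lt_one₀ (le_of_lt hbinv0) hbinv1 (Nat.succ_ne_zero l)
    have h2 : (0:ℝ) < x^l := pow_pos hx0 l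
    exact mul_pos (by linarith) h2
  have he_le : ∀ l, e l ≤ x^l := by
    intro l
    have h2 : (0:ℝ) ≤ x^l := le_of_lt (pow_pos hx0 l)
    have h3 : (0:ℝ) ≤ (b⁻¹)^(l+1) := by positivity
    simp only [hedef]
    nlinarith
  -- log series identity: HasSum (fun l => e l / (l+1)) (-A) where
  set A : ℝ := (1/x) * Real.log ((1+2*m)/(1+2*m/ρ)) with hAdef
  have hxb : |x / b| < 1 := by
    rw [abs_of_pos (by positivity)]
    rw [div_lt_one hb0]; linarith
  have hxabs : |x| < 1 := by rw [abs_of_pos hx0]; exact hx1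
  have hlog1 : HasSum (fun n : ℕ => x ^ (n + 1) / (n + 1)) (-Real.log (1 - x)) :=
    Real.hasSum_pow_div_log_of_abs_lt_one hxabs
  have hlog2 : HasSum (fun n : ℕ => (x/b) ^ (n + 1) / (n + 1)) (-Real.log (1 - x/b)) :=
    Real.hasSum_pow_div_log_of_abs_lt_one hxb
  have hρ2m : (0:ℝ) < ρ + 2*m := by linarith
  have hratio : (1+2*m)/(1+2*m/ρ) = (1 - x) / (1 - x/b) := by
    have hxρ : 1 - x = ρ := by simp [hxdef]
    have h2 : 1 - x/b = (ρ + 2*m)/b := by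
      rw [hxdef, hbdef]; field_simp; ring
    have h1 : 1 + 2*m/ρ = (ρ + 2*m)/ρ := by field_simp
    rw [hxρ, h1, h2, hbdef, div_div_eq_mul_div, div_div_eq_mul_div]
    rw [div_eq_div_iff (by positivity) (by positivity)]
    ring
  have hA_sum : HasSum (fun l : ℕ => e l / ((l:ℝ)+1)) (-A) := by
    have hsub := hlog1.sub hlog2
    have heq : ∀ l : ℕ, (x ^ (l + 1) / ((l:ℝ) + 1) - (x/b) ^ (l + 1) / ((l:ℝ) + 1)) * (1/x)
        = e l / ((l:ℝ)+1) := by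
      intro l
      have hl1 : ((l:ℝ)+1) ≠ 0 := by positivity
      rw [hedef]
      field_simp
      ring
    have : HasSum (fun l : ℕ => e l / ((l:ℝ)+1)) _ := (hsub.mul_right (1/x)).congr_fun (fun l => (heq l).symm)
    convert this using 1
    rw [hAdef, hratio]
    have h1x : (0:ℝ) < 1 - x := by linarith
    have h1xb : (0:ℝ) < 1 - x/b := by
      have : x/b < 1 := by rw [div_lt_one hb0]; linarith
      linarith
    rw [Real.log_div (ne_of_gt h1x) (ne_of_gt h1xb)]
    field_simp
    ring
  -- summand of H and the combined term
  set t : ℝ → ℕ → ℝ := fun y l => (1 - (b⁻¹)^(l+1)) * x^l * y^(l+1) / (((l:ℝ)+1) * ((l:ℝ)+2)) with htdef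
  set Sf : ℝ → ℝ := fun y => ∑' l : ℕ, t y l with hSdef
  have hH : ∀ y : ℝ, H m ρ y = -(y / (2*m)) * (A + Sf y) := fun y => rfl
  set u : ℝ → ℕ → ℝ := fun y l => e l * (y^(l+2)/(((l:ℝ)+1) * ((l:ℝ)+2)) - y/((l:ℝ)+1)) with hudef
  -- summability of t y for y in the interval
  have ht_sum : ∀ y : ℝ, 0 ≤ y → y ≤ 1/x → Summable (t y) := by
    intro y hy0 hyx
    have hxy : x * y ≤ 1 := by
      rw [← le_div_iff₀' hx0]; exact hyx
    have hb_nonneg : ∀ l : ℕ, (0:ℝ) ≤ 1 - (b⁻¹)^(l+1) := by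
      intro l
      have := pow_le_one₀ (le_of_lt hbinv0) (le_of_lt hbinv1) (n := l+1)
      linarith
    refine Summable.of_nonneg_of_le (fun l => ?_) (fun l => ?_)
      (summable_inv_mul.mul_left y)
    · simp only [htdef]
      exact div_nonneg (mul_nonneg (mul_nonneg (hb_nonneg l) (by positivity))
        (by positivity)) (by positivity)
    · simp only [htdef]
      rw [mul_one_div]
      have hnum : (1 - (b⁻¹)^(l+1)) * x^l * y^(l+1) ≤ y := by
        have h1 : (1 - (b⁻¹)^(l+1)) ≤ 1 := by
          have : (0:ℝ) ≤ (b⁻¹)^(l+1) := by positivity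
          linarith
        have h2 : x^l * y^(l+1) ≤ y := by
          have h3 : x^l * y^l ≤ 1 := by
            rw [← mul_pow]; exact pow_le_one₀ (by positivity) hxy
          have h5 : x^l * y^(l+1) = x^l * y^l * y := by
            rw [pow_succ, mul_assoc]
          rw [h5]
          have h6 : (0:ℝ) ≤ x^l * y^l := by positivity
          nlinarith
        have h4 : (0:ℝ) ≤ x^l * y^(l+1) := by positivity
        nlinarith [hb_nonneg l]
      gcongr
  -- HasSum for the combined series
  have hU : ∀ y : ℝ, 0 ≤ y → y ≤ 1/x → HasSum (u y) (y * (A + Sf y)) := by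
    intro y hy0 hyx
    have hT : HasSum (t y) (Sf y) := (ht_sum y hy0 hyx).hasSum
    have h1 := hT.mul_left y
    have h2 := hA_sum.mul_left y
    have h3 := h1.sub h2
    have heq : ∀ l : ℕ, u y l = y * t y l - y * (e l / ((l:ℝ)+1)) := by
      intro l
      simp only [hudef, htdef, hedef]
      have hl1 : ((l:ℝ)+1) ≠ 0 := by positivity
      have hl2 : ((l:ℝ)+2) ≠ 0 := by positivity
      field_simp
      ring
    have : HasSum (u y) _ := h3.congr_fun heq
    convert this using 1
    ring
  -- both y and 1 are in the interval
  intro y hy hyne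
  obtain ⟨hy0, hyx⟩ := hy
  have h1x : (1:ℝ) ≤ 1/x := by
    rw [le_div_iff₀ hx0]; linarith
  have hUy := hU y hy0 hyx
  have hU1 := hU 1 zero_le_one h1x
  have hD := hUy.sub hU1
  -- positivity of each term of the difference
  have hterm : ∀ l : ℕ, u y l - u 1 l
      = e l * (y^(l+2) - 1 - (((l:ℝ))+2)*(y-1)) / (((l:ℝ)+1) * ((l:ℝ)+2)) := by
    intro l
    simp only [hudef]
    have hl1 : ((l:ℝ)+1) ≠ 0 := by positivity
    have hl2 : ((l:ℝ)+2) ≠ 0 := by positivity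
    field_simp
    ring
  have hnonneg : ∀ l : ℕ, 0 ≤ u y l - u 1 l := by
    intro l
    rw [hterm l]
    have hb2 : (-2:ℝ) ≤ y - 1 := by linarith
    have := one_add_mul_le_pow hb2 (l+2)
    have hcast : ((l+2 : ℕ) : ℝ) = (l:ℝ) + 2 := by push_cast; ring
    rw [hcast] at this
    have hy1 : (1:ℝ) + (y - 1) = y := by ring
    rw [hy1] at this
    have h1 : 0 ≤ y^(l+2) - 1 - (((l:ℝ))+2)*(y-1) := by linarith
    have h2 : 0 < e l := he_pos l
    positivity
  have hpos0 : 0 < u y 0 - u 1 0 := by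
    rw [hterm 0]
    have h1 : y^(0+2) - 1 - (((0:ℕ):ℝ)+2)*(y-1) = (y-1)^2 := by push_cast; ring
    rw [h1]
    have h2 : 0 < e 0 := he_pos 0
    have h3 : (0:ℝ) < (y-1)^2 := by
      have : y - 1 ≠ 0 := sub_ne_zero.2 hyne
      positivity
    have h4 : (0:ℝ) < (((0:ℕ):ℝ)+1) * (((0:ℕ):ℝ)+2) := by norm_num
    positivity
  -- the sum of the difference is positive
  have hDpos : 0 < y * (A + Sf y) - 1 * (A + Sf 1) := by
    rw [← hD.tsum_eq]
    exact Summable.tsum_pos hD.summable hnonneg 0 hpos0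
  -- conclude
  rw [hH y, eta, hH 1]
  have hm2 : (0:ℝ) < 1/(2*m) := by positivity
  have key : -(1 / (2*m)) * (A + Sf 1) - (-(y / (2*m)) * (A + Sf y))
      = (1/(2*m)) * (y * (A + Sf y) - 1 * (A + Sf 1)) := by ring
  nlinarith [mul_pos hm2 hDpos]
end

section
/- For every m > 0 and ρ ∈ (0,1), the function y ↦ H((m,ρ),y) is three times differentiable on (0, 1/(1−ρ)) with H'''((m,ρ),y) = −2(1−ρ)·(1+m−(1−ρ)y) / ( (1+2m−(1−ρ)y)²·(1−(1−ρ)y)² ), and sup_{0 ≤ y ≤ 1} |H'''((m,ρ),y)| ≤ 2(1−ρ)(1+m)/ρ⁴. -/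
open Real Filter Set

/-- The formula for the third derivative `H'''((m,ρ),·)` in `y`. -/
noncomputable def Hderiv3 (m ρ y : ℝ) : ℝ :=
  -2*(1-ρ)*(1+m-(1-ρ)*y) / ((1+2*m-(1-ρ)*y)^2 * (1-(1-ρ)*y)^2)

noncomputable def G (m ρ y : ℝ) : ℝ :=
  -(1/(2*m*(1-ρ))) * (Real.log ((1+2*m)/(1+2*m/ρ)) * y +
    (1/(1-ρ)) * ((1-(1-ρ)*y) * Real.log (1-(1-ρ)*y) -
      (1+2*m-(1-ρ)*y) * (Real.log (1+2*m-(1-ρ)*y) - Real.log (1+2*m))))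

noncomputable def G1 (m ρ y : ℝ) : ℝ :=
  -(1/(2*m*(1-ρ))) * (Real.log ((1+2*m)/(1+2*m/ρ)) - Real.log (1-(1-ρ)*y) +
    Real.log (1+2*m-(1-ρ)*y) - Real.log (1+2*m))

noncomputable def G2 (m ρ y : ℝ) : ℝ :=
  -(1/(2*m)) * ((1-(1-ρ)*y)⁻¹ - (1+2*m-(1-ρ)*y)⁻¹)

lemma lemA {x : ℝ} (hx : |x| < 1) :
    HasSum (fun n : ℕ => x^(n+2)/(((n:ℝ)+1)*((n:ℝ)+2))) (x + (1-x)*Real.log (1-x)) := by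
  have L := Real.hasSum_pow_div_log_of_abs_lt_one hx
  have h1 : HasSum (fun n : ℕ => x * (x^(n+1)/((n:ℝ)+1))) (x * (-Real.log (1-x))) := L.mul_left x
  have h2 : HasSum (fun n : ℕ => x^(n+1+1)/((n:ℝ)+1+1)) (-Real.log (1-x) - x) := by
    have h := (hasSum_nat_add_iff' (f := fun n : ℕ => x^(n+1)/((n:ℝ)+1)) 1).2 L
    convert h using 2 with n
    · rfl
    · push_cast; ring_nf
    · simp
  have h3 := h1.sub h2
  have he : (fun n : ℕ => x * (x^(n+1)/((n:ℝ)+1)) - x^(n+1+1)/((n:ℝ)+1+1))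
      = fun n : ℕ => x^(n+2)/(((n:ℝ)+1)*((n:ℝ)+2)) := by
    funext n
    have a1 : ((n:ℝ)+1) ≠ 0 := by positivity
    have a2 : ((n:ℝ)+1+1) ≠ 0 := by positivity
    field_simp
    ring
  rw [he] at h3
  convert h3 using 1
  · rfl
  ring

lemma algH (m ρ y Lu Lv Kb C : ℝ) (hm : 0 < m) (hρ1 : ρ < 1) (hy0 : 0 < y) :
    -(y / (2*m)) * ((1/(1-ρ)) * C +
      ((1/((1-ρ)^2*y)) * ((1-ρ)*y + (1-(1-ρ)*y)*Lu)
        - ((1+2*m)/((1-ρ)^2*y)) * ((1+2*m)⁻¹ * ((1-ρ)*y) + (1-(1+2*m)⁻¹ * ((1-ρ)*y))*(Lv - Kb))))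
    = -(1/(2*m*(1-ρ))) * (C * y + (1/(1-ρ)) * ((1-(1-ρ)*y) * Lu - (1+2*m-(1-ρ)*y) * (Lv - Kb))) := by
  have hq : (0:ℝ) < 1 - ρ := by linarith
  have hbne : (1+2*m : ℝ) ≠ 0 := by positivity
  field_simp
  ring

lemma HeqG {m ρ : ℝ} (hm : 0 < m) (hρ : ρ ∈ Set.Ioo (0:ℝ) 1) {y : ℝ}
    (hy : y ∈ Set.Ioo (0:ℝ) (1/(1-ρ))) : H m ρ y = G m ρ y := by
  obtain ⟨hρ0, hρ1⟩ := hρ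
  obtain ⟨hy0, hy1⟩ := hy
  have hq : (0:ℝ) < 1 - ρ := by linarith
  have hb : (0:ℝ) < 1 + 2*m := by linarith
  have hbne : (1+2*m : ℝ) ≠ 0 := hb.ne'
  have hx1 : 0 < (1-ρ)*y := by positivity
  have hx1' : (1-ρ)*y < 1 := by
    rw [div_eq_mul_inv, one_mul] at hy1
    calc (1-ρ)*y < (1-ρ)*(1-ρ)⁻¹ := by exact (mul_lt_mul_iff_right₀ hq).2 hy1
    _ = 1 := mul_inv_cancel₀ hq.ne'
  have hA : (0:ℝ) < (1+2*m)⁻¹ := by positivity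
  have hA1 : (1+2*m)⁻¹ < 1 := by rw [inv_lt_one_iff₀]; right; linarith
  have hx2 : 0 < (1+2*m)⁻¹ * ((1-ρ)*y) := by positivity
  have hx2' : (1+2*m)⁻¹ * ((1-ρ)*y) < 1 := by nlinarith
  have hS1 := lemA (x := (1-ρ)*y) (by rw [abs_of_pos hx1]; exact hx1')
  have hS2 := lemA (x := (1+2*m)⁻¹ * ((1-ρ)*y)) (by rw [abs_of_pos hx2]; exact hx2')
  have key : (fun l : ℕ => (1 - ((1+2*m)⁻¹)^(l+1)) * (1-ρ)^l * y^(l+1) / (((l:ℝ)+1) * ((l:ℝ)+2)))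
      = fun l : ℕ => (1/((1-ρ)^2*y)) * (((1-ρ)*y)^(l+2)/(((l:ℝ)+1)*((l:ℝ)+2)))
        - ((1+2*m)/((1-ρ)^2*y)) * (((1+2*m)⁻¹ * ((1-ρ)*y))^(l+2)/(((l:ℝ)+1)*((l:ℝ)+2))) := by
    funext l
    have a1 : ((l:ℝ)+1) ≠ 0 := by positivity
    have a2 : ((l:ℝ)+2) ≠ 0 := by positivity
    have e1 : (1/((1-ρ)^2*y)) * ((1-ρ)*y)^(l+2) = (1-ρ)^l * y^(l+1) := by
      rw [mul_pow]
      field_simp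
      ring
    have ebA : ((1+2*m:ℝ)⁻¹)^(l+2) = (1+2*m)⁻¹ * ((1+2*m:ℝ)⁻¹)^(l+1) := pow_succ' _ _
    have e2 : ((1+2*m)/((1-ρ)^2*y)) * ((1+2*m)⁻¹ * ((1-ρ)*y))^(l+2)
        = ((1+2*m:ℝ)⁻¹)^(l+1) * ((1-ρ)^l * y^(l+1)) := by
      rw [mul_pow, ebA, mul_pow]
      field_simp
      ring
    rw [mul_div_assoc' (1/((1-ρ)^2*y)), mul_div_assoc', ← sub_div, e1, e2]
    ring
  have hsum : HasSum (fun l : ℕ => (1 - ((1+2*m)⁻¹)^(l+1)) * (1-ρ)^l * y^(l+1) / (((l:ℝ)+1) * ((l:ℝ)+2)))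
      ((1/((1-ρ)^2*y)) * ((1-ρ)*y + (1-(1-ρ)*y)*Real.log (1-(1-ρ)*y))
        - ((1+2*m)/((1-ρ)^2*y)) * ((1+2*m)⁻¹ * ((1-ρ)*y)
            + (1-(1+2*m)⁻¹ * ((1-ρ)*y))*Real.log (1-(1+2*m)⁻¹ * ((1-ρ)*y)))) := by
    rw [key]
    exact (hS1.mul_left _).sub (hS2.mul_left _)
  have hvpos : (0:ℝ) < 1+2*m-(1-ρ)*y := by nlinarith
  have hlog2 : Real.log (1-(1+2*m)⁻¹ * ((1-ρ)*y))
      = Real.log (1+2*m-(1-ρ)*y) - Real.log (1+2*m) := by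
    have he : 1-(1+2*m)⁻¹ * ((1-ρ)*y) = (1+2*m)⁻¹ * (1+2*m-(1-ρ)*y) := by
      field_simp
    rw [he, Real.log_mul (by positivity) hvpos.ne', Real.log_inv]
    ring
  rw [H, hsum.tsum_eq, hlog2, G]
  exact algH m ρ y _ _ _ _ hm hρ1 hy0

lemma hderivG {m ρ : ℝ} (hm : 0 < m) (hρ : ρ ∈ Set.Ioo (0:ℝ) 1) {y : ℝ}
    (hy : y ∈ Set.Ioo (0:ℝ) (1/(1-ρ))) : HasDerivAt (G m ρ) (G1 m ρ y) y := by
  obtain ⟨hρ0, hρ1⟩ := hρ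
  obtain ⟨hy0, hy1⟩ := hy
  have hq : (0:ℝ) < 1 - ρ := by linarith
  have hx1' : (1-ρ)*y < 1 := by
    rw [div_eq_mul_inv, one_mul] at hy1
    calc (1-ρ)*y < (1-ρ)*(1-ρ)⁻¹ := by exact (mul_lt_mul_iff_right₀ hq).2 hy1
    _ = 1 := mul_inv_cancel₀ hq.ne'
  have hu : HasDerivAt (fun y : ℝ => 1-(1-ρ)*y) (-(1-ρ)) y := by
    simpa using ((hasDerivAt_id y).const_mul (1-ρ)).const_sub 1
  have hv : HasDerivAt (fun y : ℝ => 1+2*m-(1-ρ)*y) (-(1-ρ)) y := by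
    simpa using ((hasDerivAt_id y).const_mul (1-ρ)).const_sub (1+2*m)
  have hune : 1-(1-ρ)*y ≠ 0 := by nlinarith
  have hvne : 1+2*m-(1-ρ)*y ≠ 0 := by nlinarith
  have h1 : HasDerivAt (fun y : ℝ => (1-(1-ρ)*y) * Real.log (1-(1-ρ)*y))
      ((-(1-ρ)) * Real.log (1-(1-ρ)*y) + (1-(1-ρ)*y) * ((-(1-ρ))/(1-(1-ρ)*y))) y :=
    hu.mul (hu.log hune)
  have h2 : HasDerivAt (fun y : ℝ => (1+2*m-(1-ρ)*y) * (Real.log (1+2*m-(1-ρ)*y) - Real.log (1+2*m)))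
      ((-(1-ρ)) * (Real.log (1+2*m-(1-ρ)*y) - Real.log (1+2*m))
        + (1+2*m-(1-ρ)*y) * ((-(1-ρ))/(1+2*m-(1-ρ)*y))) y :=
    hv.mul ((hv.log hvne).sub_const _)
  have h3 := (((hasDerivAt_id y).const_mul (Real.log ((1+2*m)/(1+2*m/ρ)))).add
      ((h1.sub h2).const_mul (1/(1-ρ)))).const_mul (-(1/(2*m*(1-ρ))))
  simp only [id_eq] at h3
  have h4 : HasDerivAt (G m ρ)
      (-(1/(2*m*(1-ρ))) * (Real.log ((1+2*m)/(1+2*m/ρ)) * 1 + (1/(1-ρ)) *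
        ((-(1-ρ)) * Real.log (1-(1-ρ)*y) + (1-(1-ρ)*y) * ((-(1-ρ))/(1-(1-ρ)*y)) -
          ((-(1-ρ)) * (Real.log (1+2*m-(1-ρ)*y) - Real.log (1+2*m))
            + (1+2*m-(1-ρ)*y) * ((-(1-ρ))/(1+2*m-(1-ρ)*y)))))) y := h3
  convert h4 using 1
  rw [G1]
  field_simp
  ring

lemma hderivG1 {m ρ : ℝ} (hm : 0 < m) (hρ : ρ ∈ Set.Ioo (0:ℝ) 1) {y : ℝ}
    (hy : y ∈ Set.Ioo (0:ℝ) (1/(1-ρ))) : HasDerivAt (G1 m ρ) (G2 m ρ y) y := by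
  obtain ⟨hρ0, hρ1⟩ := hρ
  obtain ⟨hy0, hy1⟩ := hy
  have hq : (0:ℝ) < 1 - ρ := by linarith
  have hx1' : (1-ρ)*y < 1 := by
    rw [div_eq_mul_inv, one_mul] at hy1
    calc (1-ρ)*y < (1-ρ)*(1-ρ)⁻¹ := by exact (mul_lt_mul_iff_right₀ hq).2 hy1
    _ = 1 := mul_inv_cancel₀ hq.ne'
  have hu : HasDerivAt (fun y : ℝ => 1-(1-ρ)*y) (-(1-ρ)) y := by
    simpa using ((hasDerivAt_id y).const_mul (1-ρ)).const_sub 1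
  have hv : HasDerivAt (fun y : ℝ => 1+2*m-(1-ρ)*y) (-(1-ρ)) y := by
    simpa using ((hasDerivAt_id y).const_mul (1-ρ)).const_sub (1+2*m)
  have hune : 1-(1-ρ)*y ≠ 0 := by nlinarith
  have hvne : 1+2*m-(1-ρ)*y ≠ 0 := by nlinarith
  have h3 := ((((hu.log hune).const_sub (Real.log ((1+2*m)/(1+2*m/ρ)))).add
      (hv.log hvne)).sub_const (Real.log (1+2*m))).const_mul (-(1/(2*m*(1-ρ))))
  have h4 : HasDerivAt (G1 m ρ)
      (-(1/(2*m*(1-ρ))) * (-((-(1-ρ))/(1-(1-ρ)*y)) + (-(1-ρ))/(1+2*m-(1-ρ)*y))) y := h3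
  convert h4 using 1
  rw [G2]
  field_simp
  ring

lemma hderivG2 {m ρ : ℝ} (hm : 0 < m) (hρ : ρ ∈ Set.Ioo (0:ℝ) 1) {y : ℝ}
    (hy : y ∈ Set.Ioo (0:ℝ) (1/(1-ρ))) : HasDerivAt (G2 m ρ) (Hderiv3 m ρ y) y := by
  obtain ⟨hρ0, hρ1⟩ := hρ
  obtain ⟨hy0, hy1⟩ := hy
  have hq : (0:ℝ) < 1 - ρ := by linarith
  have hx1' : (1-ρ)*y < 1 := by
    rw [div_eq_mul_inv, one_mul] at hy1
    calc (1-ρ)*y < (1-ρ)*(1-ρ)⁻¹ := by exact (mul_lt_mul_iff_right₀ hq).2 hy1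
    _ = 1 := mul_inv_cancel₀ hq.ne'
  have hu : HasDerivAt (fun y : ℝ => 1-(1-ρ)*y) (-(1-ρ)) y := by
    simpa using ((hasDerivAt_id y).const_mul (1-ρ)).const_sub 1
  have hv : HasDerivAt (fun y : ℝ => 1+2*m-(1-ρ)*y) (-(1-ρ)) y := by
    simpa using ((hasDerivAt_id y).const_mul (1-ρ)).const_sub (1+2*m)
  have hune : 1-(1-ρ)*y ≠ 0 := by nlinarith
  have hvne : 1+2*m-(1-ρ)*y ≠ 0 := by nlinarith
  have h3 := ((hu.inv hune).sub (hv.inv hvne)).const_mul (-(1/(2*m)))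
  have h4 : HasDerivAt (G2 m ρ)
      (-(1/(2*m)) * (-(-(1-ρ))/(1-(1-ρ)*y)^2 - -(-(1-ρ))/(1+2*m-(1-ρ)*y)^2)) y := h3
  convert h4 using 1
  rw [Hderiv3]
  field_simp
  ring

theorem stmt4 (m ρ : ℝ) (hm : 0 < m) (hρ : ρ ∈ Set.Ioo (0:ℝ) 1) :
    (∀ y ∈ Set.Ioo (0:ℝ) (1/(1-ρ)),
      HasDerivAt (deriv (deriv (H m ρ))) (Hderiv3 m ρ y) y) ∧
    (∀ y ∈ Set.Icc (0:ℝ) 1, |Hderiv3 m ρ y| ≤ 2*(1-ρ)*(1+m)/ρ^4) := by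
  obtain ⟨hρ0, hρ1⟩ := hρ
  have hρ' : ρ ∈ Set.Ioo (0:ℝ) 1 := ⟨hρ0, hρ1⟩
  have hq : (0:ℝ) < 1 - ρ := by linarith
  constructor
  · intro y hy
    have hd1 : ∀ z ∈ Set.Ioo (0:ℝ) (1/(1-ρ)), deriv (H m ρ) z = G1 m ρ z := by
      intro z hz
      have hE : H m ρ =ᶠ[nhds z] G m ρ :=
        eventually_of_mem (isOpen_Ioo.mem_nhds hz) (fun w hw => HeqG hm hρ' hw)
      rw [hE.deriv_eq, (hderivG hm hρ' hz).deriv]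
    have hd2 : ∀ z ∈ Set.Ioo (0:ℝ) (1/(1-ρ)), deriv (deriv (H m ρ)) z = G2 m ρ z := by
      intro z hz
      have hE : deriv (H m ρ) =ᶠ[nhds z] G1 m ρ :=
        eventually_of_mem (isOpen_Ioo.mem_nhds hz) (fun w hw => hd1 w hw)
      rw [hE.deriv_eq, (hderivG1 hm hρ' hz).deriv]
    have hE2 : deriv (deriv (H m ρ)) =ᶠ[nhds y] G2 m ρ :=
      eventually_of_mem (isOpen_Ioo.mem_nhds hy) (fun w hw => hd2 w hw)
    exact (hderivG2 hm hρ' hy).congr_of_eventuallyEq hE2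
  · intro y hy
    obtain ⟨hy0, hy1⟩ := hy
    have hu : ρ ≤ 1-(1-ρ)*y := by nlinarith
    have hv : ρ ≤ 1+2*m-(1-ρ)*y := by nlinarith
    have hupos : (0:ℝ) < 1-(1-ρ)*y := lt_of_lt_of_le hρ0 hu
    have hvpos : (0:ℝ) < 1+2*m-(1-ρ)*y := lt_of_lt_of_le hρ0 hv
    have hdenpos : (0:ℝ) < (1+2*m-(1-ρ)*y)^2 * (1-(1-ρ)*y)^2 := by positivity
    have hnum : -2*(1-ρ)*(1+m-(1-ρ)*y) ≤ 0 := by nlinarith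
    have habs : |Hderiv3 m ρ y| = 2*(1-ρ)*(1+m-(1-ρ)*y) / ((1+2*m-(1-ρ)*y)^2 * (1-(1-ρ)*y)^2) := by
      rw [Hderiv3, abs_of_nonpos (div_nonpos_of_nonpos_of_nonneg hnum hdenpos.le), ← neg_div]
      ring_nf
    rw [habs]
    apply div_le_div₀ (by positivity) (by nlinarith [mul_nonneg hq.le (mul_nonneg hq.le hy0)]) (by positivity)
    nlinarith [sq_nonneg (1-(1-ρ)*y), sq_nonneg (1+2*m-(1-ρ)*y), mul_le_mul hv hu hρ0.le hvpos.le,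
      sq_nonneg ρ, mul_pos hupos hvpos]
end

section
/- For every fixed ρ ∈ (0,1), η(m,ρ) → (1/(1−ρ)²)·(1/ρ − 1 + log ρ) as m → 0⁺; moreover, for every ρ ∈ (0,1) the limit satisfies the strict inequality (1/(1−ρ)²)·(1/ρ − 1 + log ρ) > 1/(2ρ). -/
open Real Filter Set

/-- Auxiliary family of summands scaled by `(2m)⁻¹`. -/
noncomputable def myF (ρ m : ℝ) (l : ℕ) : ℝ :=
  (1 - ((1+2*m)⁻¹)^(l+1)) * (1-ρ)^l * (1:ℝ)^(l+1) / (((l:ℝ)+1) * ((l:ℝ)+2)) * (2*m)⁻¹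

lemma aux_id (m : ℝ) (hm : 0 < m) (l : ℕ) :
    (1 - ((1+2*m)⁻¹)^(l+1)) * (2*m)⁻¹ =
      (1+2*m)⁻¹ * ∑ j ∈ Finset.range (l+1), ((1+2*m)⁻¹)^j := by
  have h1 : (1:ℝ)+2*m ≠ 0 := by positivity
  have hb : ((1+2*m)⁻¹ : ℝ) ≠ 1 := by
    rw [ne_eq, inv_eq_one]
    intro h; nlinarith
  rw [geom_sum_eq hb]
  have hb1 : ((1+2*m)⁻¹ : ℝ) - 1 ≠ 0 := sub_ne_zero.2 hb
  field_simp
  ring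

lemma myF_eq (ρ m : ℝ) (hm : 0 < m) (l : ℕ) :
    myF ρ m l = ((1+2*m)⁻¹ * ∑ j ∈ Finset.range (l+1), ((1+2*m)⁻¹)^j) *
      ((1-ρ)^l / (((l:ℝ)+1) * ((l:ℝ)+2))) := by
  rw [← aux_id m hm l]
  simp only [myF, one_pow]
  ring

theorem stmt5 (ρ : ℝ) (hρ : ρ ∈ Set.Ioo (0:ℝ) 1) :
    Filter.Tendsto (fun m => eta m ρ) (nhdsWithin 0 (Set.Ioi 0))
      (nhds ((1/(1-ρ)^2) * (1/ρ - 1 + Real.log ρ))) ∧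
    1/(2*ρ) < (1/(1-ρ)^2) * (1/ρ - 1 + Real.log ρ) := by
  obtain ⟨hρ0, hρ1⟩ := hρ
  have hρne : ρ ≠ 0 := ne_of_gt hρ0
  have hx0 : 0 < 1 - ρ := by linarith
  have hxne : (1:ℝ) - ρ ≠ 0 := ne_of_gt hx0
  have hx1 : 1 - ρ < 1 := by linarith
  constructor
  · -- the limit part
    -- (a) the log piece
    have hQ : Tendsto (fun m : ℝ => Real.log ((1+2*m)/(1+2*m/ρ)) / (2*m))
        (nhdsWithin 0 (Set.Ioi 0)) (nhds (1 - 1/ρ)) := by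
      have h1 : HasDerivAt (fun m : ℝ => 1+2*m) 2 0 := by
        simpa using ((hasDerivAt_id (0:ℝ)).const_mul 2).const_add 1
      have h2 : HasDerivAt (fun m : ℝ => 1+2*m/ρ) (2/ρ) 0 := by
        simpa using (((hasDerivAt_id (0:ℝ)).const_mul 2).div_const ρ).const_add 1
      have l1 : HasDerivAt (fun m : ℝ => Real.log (1+2*m)) 2 0 := by
        have := (Real.hasDerivAt_log (by norm_num : ((1:ℝ)+2*0) ≠ 0)).comp 0 h1
        simpa [Function.comp_def] using this
      have l2 : HasDerivAt (fun m : ℝ => Real.log (1+2*m/ρ)) (2/ρ) 0 := by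
        have := (Real.hasDerivAt_log (by simp : ((1:ℝ)+2*0/ρ) ≠ 0)).comp 0 h2
        simpa [Function.comp_def] using this
      have hφ : HasDerivAt (fun m : ℝ => Real.log (1+2*m) - Real.log (1+2*m/ρ)) (2 - 2/ρ) 0 :=
        l1.sub l2
      have hslope := hasDerivAt_iff_tendsto_slope.mp hφ
      have hmono : nhdsWithin (0:ℝ) (Set.Ioi 0) ≤ nhdsWithin 0 {(0:ℝ)}ᶜ :=
        nhdsWithin_mono 0 (fun y hy => ne_of_gt hy)
      have h3 := (hslope.mono_left hmono).div_const 2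
      have hval : (1 : ℝ) - 1/ρ = (2 - 2/ρ)/2 := by ring
      rw [hval]
      refine Tendsto.congr' ?_ h3
      filter_upwards [self_mem_nhdsWithin] with m hm
      have hm0 : (0:ℝ) < m := hm
      have hp1 : (0:ℝ) < 1+2*m := by linarith
      have hp2 : (0:ℝ) < 1+2*m/ρ := by positivity
      rw [slope_def_field, Real.log_div (ne_of_gt hp1) (ne_of_gt hp2)]
      simp only [mul_zero, zero_div, add_zero, Real.log_one, sub_zero]
      ring
    -- (b) the series piece via dominated convergence (Tannery)
    have hb : Tendsto (fun m : ℝ => (1+2*m)⁻¹) (nhdsWithin 0 (Set.Ioi 0)) (nhds 1) := by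
      have hc : Continuous fun m : ℝ => 1+2*m := by continuity
      have h := ((hc.tendsto 0).mono_left
        (nhdsWithin_le_nhds (s := Set.Ioi (0:ℝ)))).inv₀ (by norm_num)
      simpa using h
    have hab : ∀ l : ℕ, Tendsto (fun m => myF ρ m l) (nhdsWithin 0 (Set.Ioi 0))
        (nhds ((1-ρ)^l / ((l:ℝ)+2))) := by
      intro l
      have hl1 : ((l:ℝ)+1) ≠ 0 := by positivity
      have hl2 : ((l:ℝ)+2) ≠ 0 := by positivity
      have hcont : Continuous (fun b : ℝ =>
          (b * ∑ j ∈ Finset.range (l+1), b^j) * ((1-ρ)^l / (((l:ℝ)+1) * ((l:ℝ)+2)))) := by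
        continuity
      have h4 := (hcont.tendsto 1).comp hb
      have hF1 : ((1:ℝ) * ∑ j ∈ Finset.range (l+1), (1:ℝ)^j) *
          ((1-ρ)^l / (((l:ℝ)+1) * ((l:ℝ)+2))) = (1-ρ)^l / ((l:ℝ)+2) := by
        have hs : ∑ j ∈ Finset.range (l+1), (1:ℝ)^j = ((l:ℝ)+1) := by
          simp
        rw [hs]
        field_simp
      rw [hF1] at h4
      refine Tendsto.congr' ?_ h4
      filter_upwards [self_mem_nhdsWithin] with m hm
      exact (myF_eq ρ m hm l).symm
    have hbound : ∀ᶠ m in nhdsWithin (0:ℝ) (Set.Ioi 0), ∀ l : ℕ, ‖myF ρ m l‖ ≤ (1-ρ)^l := by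
      filter_upwards [self_mem_nhdsWithin] with m hm l
      have hm0 : (0:ℝ) < m := hm
      have hp1 : (0:ℝ) < 1+2*m := by linarith
      have hbpos : (0:ℝ) ≤ (1+2*m)⁻¹ := by positivity
      have hble : (1+2*m)⁻¹ ≤ (1:ℝ) := by
        rw [inv_le_one_iff₀]; right; linarith
      have hl1 : (0:ℝ) < (l:ℝ)+1 := by positivity
      have hl2 : (0:ℝ) < (l:ℝ)+2 := by positivity
      have hsle : ∑ j ∈ Finset.range (l+1), ((1+2*m)⁻¹)^j ≤ ((l:ℝ)+1) := by
        calc ∑ j ∈ Finset.range (l+1), ((1+2*m)⁻¹)^j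
            ≤ ∑ j ∈ Finset.range (l+1), (1:ℝ) :=
              Finset.sum_le_sum (fun j _ => pow_le_one₀ hbpos hble)
          _ = ((l:ℝ)+1) := by simp
      have hsnn : (0:ℝ) ≤ ∑ j ∈ Finset.range (l+1), ((1+2*m)⁻¹)^j :=
        Finset.sum_nonneg (fun j _ => by positivity)
      have hA1 : (1+2*m)⁻¹ * ∑ j ∈ Finset.range (l+1), ((1+2*m)⁻¹)^j ≤ ((l:ℝ)+1) := by
        calc (1+2*m)⁻¹ * ∑ j ∈ Finset.range (l+1), ((1+2*m)⁻¹)^j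
            ≤ 1 * ((l:ℝ)+1) := mul_le_mul hble hsle hsnn zero_le_one
          _ = ((l:ℝ)+1) := one_mul _
      rw [myF_eq ρ m hm l]
      have hxl : (0:ℝ) ≤ (1-ρ)^l := by positivity
      rw [Real.norm_eq_abs, abs_of_nonneg (by positivity)]
      calc ((1+2*m)⁻¹ * ∑ j ∈ Finset.range (l+1), ((1+2*m)⁻¹)^j) *
              ((1-ρ)^l / (((l:ℝ)+1) * ((l:ℝ)+2)))
          ≤ ((l:ℝ)+1) * ((1-ρ)^l / (((l:ℝ)+1) * ((l:ℝ)+2))) :=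
            mul_le_mul_of_nonneg_right hA1 (by positivity)
        _ = (1-ρ)^l / ((l:ℝ)+2) := by field_simp
        _ ≤ (1-ρ)^l := by
            apply div_le_self hxl
            linarith
    have hsummable : Summable (fun l : ℕ => (1-ρ)^l) :=
      summable_geometric_of_lt_one hx0.le hx1
    have hT : Tendsto (fun m => ∑' l : ℕ, myF ρ m l) (nhdsWithin 0 (Set.Ioi 0))
        (nhds (∑' l : ℕ, (1-ρ)^l / ((l:ℝ)+2))) :=
      tendsto_tsum_of_dominated_convergence hsummable hab hbound
    -- value of the limit series
    have hhs : HasSum (fun l : ℕ => (1-ρ)^l / ((l:ℝ)+2))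
        (((1-ρ)^2)⁻¹ * (-Real.log ρ - (1-ρ))) := by
      have habs : |1-ρ| < 1 := by rw [abs_of_pos hx0]; linarith
      have h0 := hasSum_pow_div_log_of_abs_lt_one habs
      have hρeq : (1 : ℝ) - (1-ρ) = ρ := by ring
      rw [hρeq] at h0
      have h1 : HasSum (fun n : ℕ => (1-ρ)^(n+1+1) / ((n:ℝ)+1+1))
          (-Real.log ρ - (1-ρ)) := by
        have h2 := (hasSum_nat_add_iff'
          (f := fun n : ℕ => (1-ρ)^(n+1) / ((n:ℝ)+1)) 1).mpr h0
        have he : -Real.log ρ - (1-ρ) =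
            -Real.log ρ - ∑ i ∈ Finset.range 1, (1-ρ)^(i+1) / ((i:ℝ)+1) := by
          simp
        rw [he]
        convert h2 using 2 with n
        · rfl
        push_cast
        ring
      have heq : (fun l : ℕ => (1-ρ)^l / ((l:ℝ)+2)) =
          fun n : ℕ => ((1-ρ)^2)⁻¹ * ((1-ρ)^(n+1+1) / ((n:ℝ)+1+1)) := by
        funext n
        have hn2 : ((n:ℝ)+1+1) ≠ 0 := by positivity
        rw [pow_add]
        field_simp
        ring
      rw [heq]
      exact h1.mul_left _
    have hT' : Tendsto (fun m => ∑' l : ℕ, myF ρ m l) (nhdsWithin 0 (Set.Ioi 0))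
        (nhds (((1-ρ)^2)⁻¹ * (-Real.log ρ - (1-ρ)))) := by
      rwa [hhs.tsum_eq] at hT
    -- expression of eta
    have hE : (fun m => -((1/(1-ρ)) * (Real.log ((1+2*m)/(1+2*m/ρ)) / (2*m))) -
        ∑' l : ℕ, myF ρ m l) =ᶠ[nhdsWithin (0:ℝ) (Set.Ioi 0)] (fun m => eta m ρ) := by
      filter_upwards [self_mem_nhdsWithin] with m hm
      simp only [eta, H, myF]
      rw [tsum_mul_right]
      ring
    have hfinal := ((hQ.const_mul (1/(1-ρ))).neg.sub hT')
    have hval2 : (1/(1-ρ)^2) * (1/ρ - 1 + Real.log ρ) =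
        -((1/(1-ρ)) * (1 - 1/ρ)) - (((1-ρ)^2)⁻¹ * (-Real.log ρ - (1-ρ))) := by
      field_simp
      ring
    rw [hval2]
    exact Tendsto.congr' hE hfinal
  · -- the inequality part
    have hg : StrictAntiOn (fun t : ℝ => 2*(1-t) + 2*t*Real.log t - (1-t)^2)
        (Set.Icc ρ 1) := by
      apply strictAntiOn_of_deriv_neg (convex_Icc ρ 1)
      · apply ContinuousOn.sub
        · apply ContinuousOn.add
          · exact (continuous_const.mul (continuous_const.sub continuous_id)).continuousOn
          · refine ContinuousOn.mul ?_ ?_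
            · exact (continuous_const.mul continuous_id).continuousOn
            · exact Real.continuousOn_log.mono (fun t ht => by
                simp only [Set.mem_compl_iff, Set.mem_singleton_iff]
                exact ne_of_gt (lt_of_lt_of_le hρ0 ht.1))
        · exact ((continuous_const.sub continuous_id).pow 2).continuousOn
      · intro t ht
        rw [interior_Icc] at ht
        have ht0 : 0 < t := lt_trans hρ0 ht.1
        have hder : HasDerivAt (fun t : ℝ => 2*(1-t) + 2*t*Real.log t - (1-t)^2)
            (2*Real.log t + 2 - 2*t) t := by
          have d1 : HasDerivAt (fun t : ℝ => 2*(1-t)) (-2) t := by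
            simpa using ((hasDerivAt_id t).const_sub 1).const_mul 2
          have d2 : HasDerivAt (fun t : ℝ => 2*t*Real.log t) (2*Real.log t + 2) t := by
            have := ((hasDerivAt_id t).const_mul 2).mul (Real.hasDerivAt_log (ne_of_gt ht0))
            refine this.congr_deriv ?_
            field_simp [id]
            simp only [id]
            ring
          have d3 : HasDerivAt (fun t : ℝ => (1-t)^2) (-(2*(1-t))) t := by
            have := ((hasDerivAt_id t).const_sub 1).pow 2
            refine this.congr_deriv ?_
            simp
          have := (d1.add d2).sub d3
          refine this.congr_deriv ?_
          ring
        rw [hder.deriv]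
        have := Real.log_lt_sub_one_of_pos ht0 (ne_of_lt ht.2)
        linarith
    have hmem1 : ρ ∈ Set.Icc ρ 1 := ⟨le_refl ρ, le_of_lt hρ1⟩
    have hmem2 : (1:ℝ) ∈ Set.Icc ρ 1 := ⟨le_of_lt hρ1, le_refl 1⟩
    have hgρ := hg hmem1 hmem2 hρ1
    simp only [Real.log_one] at hgρ
    have hgρ' : 0 < 2*(1-ρ) + 2*ρ*Real.log ρ - (1-ρ)^2 := by
      norm_num at hgρ
      linarith
    have hden : (0:ℝ) < 2*ρ*(1-ρ)^2 := by positivity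
    have hdiff : (1/(1-ρ)^2) * (1/ρ - 1 + Real.log ρ) - 1/(2*ρ) =
        (2*(1-ρ) + 2*ρ*Real.log ρ - (1-ρ)^2) / (2*ρ*(1-ρ)^2) := by
      field_simp
    have hpos := div_pos hgρ' hden
    linarith
end

section
/- For every m > 0, ρ ∈ (0,1) and y ∈ (0,1): |H((m,ρ),y) − H((m,ρ),1) + (1−y)²/(2ρ²)| ≤ m·(1−y)²/ρ³ + (1−ρ)(1+m)·(1−y)³/(3ρ⁴). -/
open Real Filter Set

lemma myHasSum_sq {x : ℝ} (hx0 : 0 < x) (hx1 : x < 1) :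
    HasSum (fun l : ℕ => x^(l+1)/(((l:ℝ)+1)*((l:ℝ)+2)))
      (1 + (1-x)*Real.log (1-x)/x) := by
  have hxabs : |x| < 1 := by rw [abs_of_pos hx0]; exact hx1
  have h1 : HasSum (fun n : ℕ => x ^ (n + 1) / ((n:ℝ) + 1)) (-Real.log (1 - x)) :=
    Real.hasSum_pow_div_log_of_abs_lt_one hxabs
  have h2 : HasSum (fun n : ℕ => x ^ (n + 1 + 1) / ((n:ℝ) + 1 + 1)) (-Real.log (1-x) - x) := by
    have h2' := (hasSum_nat_add_iff' (f := fun n : ℕ => x ^ (n + 1) / ((n:ℝ) + 1)) 1).mpr h1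
    simp only [Finset.range_one, Finset.sum_singleton, Nat.cast_zero, zero_add, pow_one,
      div_one] at h2'
    convert h2' using 2 with n
    · rfl
    push_cast
    ring_nf
  have h3 := h1.sub (h2.div_const x)
  have heq : (fun l : ℕ => x^(l+1)/(((l:ℝ)+1)*((l:ℝ)+2)))
      = fun n : ℕ => x ^ (n + 1) / ((n:ℝ) + 1) - x ^ (n + 1 + 1) / ((n:ℝ) + 1 + 1) / x := by
    funext n
    have hn1 : ((n:ℝ)+1) ≠ 0 := by positivity
    have hn2 : ((n:ℝ)+1+1) ≠ 0 := by positivity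
    field_simp
    ring
  have hv : 1 + (1-x)*Real.log (1-x)/x = -Real.log (1-x) - (-Real.log (1-x) - x)/x := by
    field_simp; ring
  rw [heq, hv]
  exact h3

noncomputable def gg (r a t : ℝ) : ℝ :=
  t*(Real.log (1-r) - Real.log (1-a*r))/r
  + (1-r*t)*Real.log (1-r*t)/r^2 - (1-a*r*t)*Real.log (1-a*r*t)/(a*r^2)

noncomputable def gg1 (r a t : ℝ) : ℝ :=
  (Real.log (1-r) - Real.log (1-a*r) - Real.log (1-r*t) + Real.log (1-a*r*t))/r

noncomputable def gg2 (r a t : ℝ) : ℝ := 1/(1-r*t) - a/(1-a*r*t)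

noncomputable def gg3 (r a t : ℝ) : ℝ := r/(1-r*t)^2 - a^2*r/(1-a*r*t)^2

lemma H_eq {m ρ y : ℝ} (hm : 0 < m) (hρ0 : 0 < ρ) (hρ1 : ρ < 1) (hy0 : 0 < y) (hy1 : y ≤ 1) :
    H m ρ y = -(gg (1-ρ) (1+2*m)⁻¹ y)/(2*m) := by
  set r : ℝ := 1 - ρ with hr
  set a : ℝ := (1+2*m)⁻¹ with ha
  have h2m : (0:ℝ) < 1 + 2*m := by linarith
  have hr0 : 0 < r := by simp [hr]; linarith
  have hr1 : r < 1 := by simp [hr]; linarith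
  have ha0 : 0 < a := by rw [ha]; positivity
  have ha1 : a < 1 := by rw [ha, inv_lt_one_iff₀]; right; linarith
  have hx10 : 0 < r*y := by positivity
  have hx11 : r*y < 1 := by nlinarith
  have hx20 : 0 < a*r*y := by positivity
  have hx21 : a*r*y < 1 := by nlinarith
  have har1 : a*r < 1 := by nlinarith
  have har0 : 0 < a*r := by positivity
  have hs1 := myHasSum_sq hx10 hx11
  have hs2 := myHasSum_sq hx20 hx21
  have hs3 := (hs1.sub hs2).div_const r
  have heq : (fun l : ℕ => ((r*y)^(l+1)/(((l:ℝ)+1)*((l:ℝ)+2))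
        - (a*r*y)^(l+1)/(((l:ℝ)+1)*((l:ℝ)+2)))/r)
      = fun l : ℕ => (1 - ((1+2*m)⁻¹)^(l+1)) * (1-ρ)^l * y^(l+1) / (((l:ℝ)+1) * ((l:ℝ)+2)) := by
    funext l
    have hn1 : ((l:ℝ)+1) ≠ 0 := by positivity
    have hn2 : ((l:ℝ)+2) ≠ 0 := by positivity
    rw [mul_pow, mul_pow, mul_pow, ← ha, ← hr, pow_succ r l]
    field_simp
  rw [heq] at hs3
  have htsum := hs3.tsum_eq
  have hd1 : 0 < 1 - r := by linarith
  have hd2 : 0 < 1 - a*r := by linarith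
  have hfrac : (1+2*m)/(1+2*m/ρ) = (1-r)/(1-a*r) := by
    rw [hr, ha]
    have hρ' : ρ ≠ 0 := ne_of_gt hρ0
    have : 1 + 2*m/ρ ≠ 0 := by positivity
    have : (1:ℝ)+2*m-(1-ρ) ≠ 0 := ne_of_gt (by linarith)
    field_simp
    ring
  have hlog : Real.log ((1+2*m)/(1+2*m/ρ)) = Real.log (1-r) - Real.log (1-a*r) := by
    rw [hfrac, Real.log_div (ne_of_gt hd1) (ne_of_gt hd2)]
  rw [H, htsum, hlog, gg]
  have hry : 1 - r*y ≠ 0 := by nlinarith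
  have hary : 1 - a*r*y ≠ 0 := by nlinarith
  have : (1:ℝ) - ρ ≠ 0 := ne_of_gt (by linarith)
  field_simp
  ring

lemma hAux1 (r t : ℝ) : HasDerivAt (fun s => 1 - r*s) (-r) t := by
  simpa using ((hasDerivAt_id t).const_mul r).const_sub 1

lemma hder_gg {r a t : ℝ} (hr : 0 < r) (ha : 0 < a) (h1 : 0 < 1 - r*t) (h2 : 0 < 1 - a*r*t) :
    HasDerivAt (gg r a) (gg1 r a t) t := by
  have hl1 : HasDerivAt (fun s => Real.log (1-r*s)) (-r/(1-r*t)) t :=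
    (hAux1 r t).log (ne_of_gt h1)
  have hl2 : HasDerivAt (fun s => Real.log (1-a*r*s)) (-(a*r)/(1-a*r*t)) t :=
    (hAux1 (a*r) t).log (ne_of_gt h2)
  have hT1 : HasDerivAt (fun s => s*(Real.log (1-r) - Real.log (1-a*r))/r)
      ((Real.log (1-r) - Real.log (1-a*r))/r) t := by
    simpa using ((hasDerivAt_id t).mul_const (Real.log (1-r) - Real.log (1-a*r))).div_const r
  have hT2 : HasDerivAt (fun s => (1-r*s)*Real.log (1-r*s)/r^2)
      (((-r)*Real.log (1-r*t) + (1-r*t)*(-r/(1-r*t)))/r^2) t :=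
    ((hAux1 r t).mul hl1).div_const (r^2)
  have hT3 : HasDerivAt (fun s => (1-a*r*s)*Real.log (1-a*r*s)/(a*r^2))
      (((-(a*r))*Real.log (1-a*r*t) + (1-a*r*t)*(-(a*r)/(1-a*r*t)))/(a*r^2)) t :=
    ((hAux1 (a*r) t).mul hl2).div_const (a*r^2)
  have := (hT1.add hT2).sub hT3
  refine this.congr_deriv ?_
  rw [gg1]
  have : 1 - r*a*t ≠ 0 := ne_of_gt (by linarith [h2, show r*a*t = a*r*t by ring])
  field_simp
  ring

lemma hder_gg1 {r a t : ℝ} (hr : 0 < r) (ha : 0 < a) (h1 : 0 < 1 - r*t) (h2 : 0 < 1 - a*r*t) :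
    HasDerivAt (gg1 r a) (gg2 r a t) t := by
  have hl1 : HasDerivAt (fun s => Real.log (1-r*s)) (-r/(1-r*t)) t :=
    (hAux1 r t).log (ne_of_gt h1)
  have hl2 : HasDerivAt (fun s => Real.log (1-a*r*s)) (-(a*r)/(1-a*r*t)) t :=
    (hAux1 (a*r) t).log (ne_of_gt h2)
  have := (((hl1.const_sub (Real.log (1-r) - Real.log (1-a*r))).add hl2).div_const r)
  refine this.congr_deriv ?_
  rw [gg2]
  field_simp
  ring

lemma hder_gg2 {r a t : ℝ} (hr : 0 < r) (ha : 0 < a) (h1 : 0 < 1 - r*t) (h2 : 0 < 1 - a*r*t) :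
    HasDerivAt (gg2 r a) (gg3 r a t) t := by
  have hi1 : HasDerivAt (fun s => 1/(1-r*s)) (-(-r)/(1-r*t)^2) t := by
    simpa [one_div, Pi.inv_def] using ((hAux1 r t).inv (ne_of_gt h1))
  have hi2 : HasDerivAt (fun s => a * (1-a*r*s)⁻¹) (a * (-(-(a*r))/(1-a*r*t)^2)) t :=
    ((hAux1 (a*r) t).inv (ne_of_gt h2)).const_mul a
  have := hi1.sub hi2
  refine this.congr_deriv ?_
  rw [gg3]
  field_simp

lemma mono_aux {f f' : ℝ → ℝ} {c d : ℝ} (hcd : c ≤ d)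
    (hder : ∀ t ∈ Set.Icc c d, HasDerivAt f (f' t) t)
    (hpos : ∀ t ∈ Set.Icc c d, 0 ≤ f' t) : f c ≤ f d := by
  have hmono := monotoneOn_of_deriv_nonneg (convex_Icc c d)
      (fun t ht => (hder t ht).continuousAt.continuousWithinAt)
      (fun t ht => (hder t (interior_subset ht)).differentiableAt.differentiableWithinAt)
      (fun t ht => by rw [(hder t (interior_subset ht)).deriv]; exact hpos t (interior_subset ht))
  exact hmono (left_mem_Icc.2 hcd) (right_mem_Icc.2 hcd) hcd

lemma anti_aux {f f' : ℝ → ℝ} {c d : ℝ} (hcd : c ≤ d)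
    (hder : ∀ t ∈ Set.Icc c d, HasDerivAt f (f' t) t)
    (hneg : ∀ t ∈ Set.Icc c d, f' t ≤ 0) : f d ≤ f c := by
  have := mono_aux (f := fun x => -f x) (f' := fun x => -f' x) hcd
    (fun t ht => (hder t ht).neg) (fun t ht => neg_nonneg.2 (hneg t ht))
  have h2 : -f c ≤ -f d := this
  linarith

lemma gg3_nonneg {r a t : ℝ} (hr0 : 0 < r) (hr1 : r < 1) (ha0 : 0 < a) (ha1 : a < 1)
    (ht0 : 0 ≤ t) (ht1 : t ≤ 1) : 0 ≤ gg3 r a t := by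
  have h1 : 0 < 1 - r*t := by nlinarith
  have h2 : 0 < 1 - a*r*t := by nlinarith
  have heq : gg3 r a t = r*(1-a)*(1+a-2*a*r*t)/((1-r*t)^2*(1-a*r*t)^2) := by
    rw [gg3]; have : 1 - r*t*a ≠ 0 := ne_of_gt (by linarith [h2, show r*t*a = a*r*t by ring]); field_simp; ring
  rw [heq]
  apply div_nonneg _ (by positivity)
  have : 0 ≤ 1+a-2*a*r*t := by nlinarith
  have : 0 ≤ 1-a := by linarith
  positivity

lemma gg3_le {r a t : ℝ} (hr0 : 0 < r) (hr1 : r < 1) (ha0 : 0 < a) (ha1 : a < 1)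
    (ht0 : 0 ≤ t) (ht1 : t ≤ 1) :
    gg3 r a t ≤ r*(1-a)*(1+a)/((1-r)^2*(1-a*r)^2) := by
  have h1 : 0 < 1 - r*t := by nlinarith
  have h2 : 0 < 1 - a*r*t := by nlinarith
  have hd1 : 0 < 1 - r := by linarith
  have hd2 : 0 < 1 - a*r := by nlinarith
  have heq : gg3 r a t = r*(1-a)*(1+a-2*a*r*t)/((1-r*t)^2*(1-a*r*t)^2) := by
    rw [gg3]; have : 1 - r*t*a ≠ 0 := ne_of_gt (by linarith [h2, show r*t*a = a*r*t by ring]); field_simp; ring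
  rw [heq]
  have h1a : (0:ℝ) ≤ 1 - a := by linarith
  have hnn : 0 ≤ r*(1-a)*(2*a*r*t) :=
    mul_nonneg (mul_nonneg hr0.le h1a) (by positivity)
  have hnum : r*(1-a)*(1+a-2*a*r*t) ≤ r*(1-a)*(1+a) := by nlinarith [hnn]
  have hden : (1-r)^2*(1-a*r)^2 ≤ (1-r*t)^2*(1-a*r*t)^2 := by
    have e1 : (1-r)^2 ≤ (1-r*t)^2 := by
      apply pow_le_pow_left₀ hd1.le _ 2
      nlinarith [mul_le_of_le_one_right hr0.le ht1]
    have e2 : (1-a*r)^2 ≤ (1-a*r*t)^2 := by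
      apply pow_le_pow_left₀ hd2.le _ 2
      nlinarith [mul_le_of_le_one_right (mul_pos ha0 hr0).le ht1]
    exact mul_le_mul e1 e2 (sq_nonneg _) (sq_nonneg _)
  calc r*(1-a)*(1+a-2*a*r*t)/((1-r*t)^2*(1-a*r*t)^2)
      ≤ r*(1-a)*(1+a)/((1-r*t)^2*(1-a*r*t)^2) := by gcongr
    _ ≤ r*(1-a)*(1+a)/((1-r)^2*(1-a*r)^2) := by
        apply div_le_div_of_nonneg_left
          (mul_nonneg (mul_nonneg hr0.le h1a) (by linarith)) (by positivity) hden

lemma ident_aux {G1 G2 K m ρ y : ℝ} (hm : m ≠ 0) (hρ : ρ ≠ 0) (hc : ρ + 2*m ≠ 0)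
    (hK : K = 2*m/(ρ*(ρ+2*m))) :
    -G1/(2*m) - -G2/(2*m) + (1-y)^2/(2*ρ^2)
      = m*(1-y)^2/(ρ^2*(ρ+2*m)) - (G1 - G2 - K*(y-1)^2/2)/(2*m) := by
  subst hK
  field_simp
  ring

lemma final_bound1 {m ρ y : ℝ} (hm : 0 < m) (hρ0 : 0 < ρ) :
    m*(1-y)^2/(ρ^2*(ρ+2*m)) ≤ m*(1-y)^2/ρ^3 := by
  apply div_le_div_of_nonneg_left (by positivity) (by positivity)
  nlinarith [sq_nonneg ρ, mul_pos hm (mul_pos hρ0 hρ0)]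

lemma final_bound2 {m ρ y : ℝ} (hm : 0 < m) (hρ0 : 0 < ρ) (hρ1 : ρ < 1) (hy1 : y < 1) :
    (1-ρ)*(1+m)*(1-y)^3/(3*(ρ^2*(ρ+2*m)^2)) ≤ (1-ρ)*(1+m)*(1-y)^3/(3*ρ^4) := by
  have hy3 : (0:ℝ) ≤ (1-y)^3 := pow_nonneg (by linarith) 3
  have hnum : (0:ℝ) ≤ (1-ρ)*(1+m)*(1-y)^3 :=
    mul_nonneg (mul_nonneg (by linarith) (by linarith)) hy3
  apply div_le_div_of_nonneg_left hnum (by positivity)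
  have hsq : ρ^2 ≤ (ρ+2*m)^2 := by nlinarith
  nlinarith [mul_le_mul_of_nonneg_left hsq (sq_nonneg ρ)]

lemma h3_aux {m ρ y r M : ℝ} (hM : M = 4*m*(1+m)*r/(ρ^2*(ρ+2*m)^2)) (hr : r = 1-ρ)
    (hm : m ≠ 0) (hρ : ρ ≠ 0) (hc : ρ+2*m ≠ 0) :
    M*(1-y)^3/6/(2*m) = (1-ρ)*(1+m)*(1-y)^3/(3*(ρ^2*(ρ+2*m)^2)) := by
  subst hM hr
  field_simp
  ring

theorem stmt8 (m ρ y : ℝ) (hm : 0 < m) (hρ : ρ ∈ Set.Ioo (0:ℝ) 1)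
    (hy : y ∈ Set.Ioo (0:ℝ) 1) :
    |H m ρ y - H m ρ 1 + (1-y)^2/(2*ρ^2)| ≤
      m*(1-y)^2/ρ^3 + (1-ρ)*(1+m)*(1-y)^3/(3*ρ^4) := by
  obtain ⟨hρ0, hρ1⟩ := hρ
  obtain ⟨hy0, hy1⟩ := hy
  obtain ⟨r, hrdef⟩ : ∃ r : ℝ, r = 1 - ρ := ⟨_, rfl⟩
  obtain ⟨a, hadef⟩ : ∃ a : ℝ, a = (1+2*m)⁻¹ := ⟨_, rfl⟩
  have h2m : (0:ℝ) < 1 + 2*m := by linarith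
  have hr0 : 0 < r := by simp [hrdef]; linarith
  have hr1 : r < 1 := by simp [hrdef]; linarith
  have ha0 : 0 < a := by rw [hadef]; positivity
  have ha1 : a < 1 := by rw [hadef, inv_lt_one_iff₀]; right; linarith
  have hρ2m : (0:ℝ) < ρ + 2*m := by linarith
  -- positivity of denominators on [y,1]
  have hbnd : ∀ t ∈ Set.Icc y 1, 0 < 1 - r*t ∧ 0 < 1 - a*r*t := by
    intro t ht
    have h0t : 0 < t := lt_of_lt_of_le hy0 ht.1
    constructor <;> nlinarith [ht.2, mul_pos ha0 hr0]
  -- derivative packages on Icc y 1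
  have hdg : ∀ t ∈ Set.Icc y 1, HasDerivAt (gg r a) (gg1 r a t) t := fun t ht =>
    hder_gg hr0 ha0 (hbnd t ht).1 (hbnd t ht).2
  have hdg1 : ∀ t ∈ Set.Icc y 1, HasDerivAt (gg1 r a) (gg2 r a t) t := fun t ht =>
    hder_gg1 hr0 ha0 (hbnd t ht).1 (hbnd t ht).2
  have hdg2 : ∀ t ∈ Set.Icc y 1, HasDerivAt (gg2 r a) (gg3 r a t) t := fun t ht =>
    hder_gg2 hr0 ha0 (hbnd t ht).1 (hbnd t ht).2
  obtain ⟨K, hKdef⟩ : ∃ K : ℝ, K = gg2 r a 1 := ⟨_, rfl⟩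
  obtain ⟨M, hMdef⟩ : ∃ M : ℝ, M = 4*m*(1+m)*r/(ρ^2*(ρ+2*m)^2) := ⟨_, rfl⟩
  -- bounds on gg3
  have hg3nn : ∀ t ∈ Set.Icc y 1, 0 ≤ gg3 r a t := fun t ht =>
    gg3_nonneg hr0 hr1 ha0 ha1 (le_of_lt (lt_of_lt_of_le hy0 ht.1)) ht.2
  have hMeq : r*(1-a)*(1+a)/((1-r)^2*(1-a*r)^2) = M := by
    rw [hMdef, hadef, hrdef]
    have h1 : (1:ℝ) - (1+2*m)⁻¹*(1-ρ) = (ρ+2*m)/(1+2*m) := by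
      field_simp
      ring
    rw [h1]
    rw [div_pow, show (1:ℝ) - (1-ρ) = ρ by ring]
    field_simp
    ring
  have hg3le : ∀ t ∈ Set.Icc y 1, gg3 r a t ≤ M := fun t ht => by
    rw [← hMeq]
    exact gg3_le hr0 hr1 ha0 ha1 (le_of_lt (lt_of_lt_of_le hy0 ht.1)) ht.2
  -- values at 1
  have hgg1_1 : gg1 r a 1 = 0 := by rw [gg1]; rw [mul_one, mul_one]; ring
  -- derivative helpers for polynomial parts
  have hlinK : ∀ s : ℝ, HasDerivAt (fun s => K*(s-1)) K s := fun s => by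
    simpa using ((hasDerivAt_id s).sub_const 1).const_mul K
  have hquadK : ∀ s : ℝ, HasDerivAt (fun s => K*(s-1)^2/2) (K*(s-1)) s := fun s => by
    have := ((((hasDerivAt_id s).sub_const 1).pow 2).const_mul K).div_const 2
    refine this.congr_deriv ?_
    simp
    ring
  have hlinM : ∀ s : ℝ, HasDerivAt (fun s => M*(1-s)) (-M) s := fun s => by
    have := ((hasDerivAt_id s).const_sub 1).const_mul M
    refine this.congr_deriv ?_
    ring
  have hquadM : ∀ s : ℝ, HasDerivAt (fun s => M*(1-s)^2/2) (-(M*(1-s))) s := fun s => by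
    have := ((((hasDerivAt_id s).const_sub 1).pow 2).const_mul M).div_const 2
    refine this.congr_deriv ?_
    simp
    ring
  have hcubM : ∀ s : ℝ, HasDerivAt (fun s => M*(1-s)^3/6) (-(M*(1-s)^2/2)) s := fun s => by
    have := ((((hasDerivAt_id s).const_sub 1).pow 3).const_mul M).div_const 6
    refine this.congr_deriv ?_
    simp
    ring
  have hsub : ∀ t ∈ Set.Icc y 1, Set.Icc t 1 ⊆ Set.Icc y 1 := fun t ht =>
    Set.Icc_subset_Icc ht.1 le_rfl
  -- chain for E : E(y) ≤ 0
  have hE2 : ∀ t ∈ Set.Icc y 1, gg2 r a t - K ≤ 0 := by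
    intro t ht
    have h : gg2 r a t ≤ gg2 r a 1 := mono_aux ht.2
      (fun s hs => hdg2 s (hsub t ht hs)) (fun s hs => hg3nn s (hsub t ht hs))
    rw [hKdef]
    linarith
  have hE1 : ∀ t ∈ Set.Icc y 1, 0 ≤ gg1 r a t - K*(t-1) := by
    intro t ht
    have h : gg1 r a 1 - K*(1-1) ≤ gg1 r a t - K*(t-1) :=
      anti_aux (f := fun s => gg1 r a s - K*(s-1)) (f' := fun s => gg2 r a s - K) ht.2
        (fun s hs => (hdg1 s (hsub t ht hs)).sub (hlinK s))
        (fun s hs => hE2 s (hsub t ht hs))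
    rw [hgg1_1] at h
    linarith
  have hEy : gg r a y - gg r a 1 - K*(y-1)^2/2 ≤ 0 := by
    have h : gg r a y - gg r a 1 - K*(y-1)^2/2 ≤ gg r a 1 - gg r a 1 - K*(1-1)^2/2 :=
      mono_aux (f := fun s => gg r a s - gg r a 1 - K*(s-1)^2/2)
        (f' := fun s => gg1 r a s - K*(s-1)) hy1.le
        (fun s hs => ((hdg s hs).sub_const (gg r a 1)).sub (hquadK s))
        hE1
    nlinarith [h]
  -- chain for F : 0 ≤ E(y) + M*(1-y)^3/6
  have hF2 : ∀ t ∈ Set.Icc y 1, 0 ≤ gg2 r a t - K + M*(1-t) := by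
    intro t ht
    have h : gg2 r a 1 - K + M*(1-1) ≤ gg2 r a t - K + M*(1-t) :=
      anti_aux (f := fun s => gg2 r a s - K + M*(1-s)) (f' := fun s => gg3 r a s - M) ht.2
        (fun s hs => ((hdg2 s (hsub t ht hs)).sub_const K).add (hlinM s))
        (fun s hs => sub_nonpos.mpr (hg3le s (hsub t ht hs)))
    have hKe : K = gg2 r a 1 := hKdef
    nlinarith [h, hKe]
  have hF1 : ∀ t ∈ Set.Icc y 1, gg1 r a t - K*(t-1) - M*(1-t)^2/2 ≤ 0 := by
    intro t ht
    have h : gg1 r a t - K*(t-1) - M*(1-t)^2/2 ≤ gg1 r a 1 - K*(1-1) - M*(1-1)^2/2 :=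
      mono_aux (f := fun s => gg1 r a s - K*(s-1) - M*(1-s)^2/2)
        (f' := fun s => gg2 r a s - K + M*(1-s)) ht.2
        (fun s hs => by
          have hd := ((hdg1 s (hsub t ht hs)).sub (hlinK s)).sub (hquadM s)
          refine hd.congr_deriv ?_
          ring)
        (fun s hs => hF2 s (hsub t ht hs))
    rw [hgg1_1] at h
    nlinarith [h]
  have hFy : 0 ≤ gg r a y - gg r a 1 - K*(y-1)^2/2 + M*(1-y)^3/6 := by
    have h : gg r a 1 - gg r a 1 - K*(1-1)^2/2 + M*(1-1)^3/6
        ≤ gg r a y - gg r a 1 - K*(y-1)^2/2 + M*(1-y)^3/6 :=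
      anti_aux (f := fun s => gg r a s - gg r a 1 - K*(s-1)^2/2 + M*(1-s)^3/6)
        (f' := fun s => gg1 r a s - K*(s-1) - M*(1-s)^2/2) hy1.le
        (fun s hs => (((hdg s hs).sub_const (gg r a 1)).sub (hquadK s)).add (hcubM s))
        hF1
    nlinarith [h]
  -- closed forms
  have hrw1 := H_eq hm hρ0 hρ1 hy0 hy1.le
  have hrw2 := H_eq hm hρ0 hρ1 one_pos le_rfl
  rw [← hrdef, ← hadef] at hrw1 hrw2
  have hρne : ρ ≠ 0 := ne_of_gt hρ0
  have hρ2mne : ρ + 2*m ≠ 0 := ne_of_gt hρ2m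
  have hmne : m ≠ 0 := ne_of_gt hm
  have hK : K = 2*m/(ρ*(ρ+2*m)) := by
    rw [hKdef, gg2, hadef, hrdef]
    simp only [mul_one]
    rw [show (1:ℝ) - (1-ρ) = ρ by ring]
    rw [show (1:ℝ) - (1+2*m)⁻¹*(1-ρ) = (ρ+2*m)/(1+2*m) by field_simp; ring]
    field_simp
    ring
  have hident : H m ρ y - H m ρ 1 + (1-y)^2/(2*ρ^2)
      = m*(1-y)^2/(ρ^2*(ρ+2*m)) - (gg r a y - gg r a 1 - K*(y-1)^2/2)/(2*m) := by
    rw [hrw1, hrw2]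
    exact ident_aux hmne hρne hρ2mne hK
  obtain ⟨X, hXdef⟩ : ∃ X : ℝ, X = gg r a y - gg r a 1 - K*(y-1)^2/2 := ⟨_, rfl⟩
  rw [← hXdef] at hEy hFy hident
  clear hdg hdg1 hdg2 hbnd hE2 hE1 hF2 hF1 hg3nn hg3le hlinK hquadK hlinM hquadM hcubM hsub
    hrw1 hrw2 hgg1_1 hMeq hKdef hXdef hK hadef ha0 ha1
  have h2m' : (0:ℝ) < 2*m := by linarith only [hm]
  have hterm1 : (0:ℝ) ≤ m*(1-y)^2/(ρ^2*(ρ+2*m)) := by positivity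
  have hXdiv : X/(2*m) ≤ 0 := div_nonpos_of_nonpos_of_nonneg hEy h2m'.le
  rw [hident, abs_of_nonneg (by linarith only [hterm1, hXdiv])]
  have hb1 : m*(1-y)^2/(ρ^2*(ρ+2*m)) ≤ m*(1-y)^2/ρ^3 := final_bound1 hm hρ0
  have h5 : -X ≤ M*(1-y)^3/6 := by linarith only [hFy]
  have h6 : (-X)/(2*m) ≤ (M*(1-y)^3/6)/(2*m) := (div_le_div_iff_of_pos_right h2m').mpr h5
  have h3 : M*(1-y)^3/6/(2*m) = (1-ρ)*(1+m)*(1-y)^3/(3*(ρ^2*(ρ+2*m)^2)) :=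
    h3_aux hMdef hrdef hmne hρne hρ2mne
  rw [h3] at h6
  have h4 : (1-ρ)*(1+m)*(1-y)^3/(3*(ρ^2*(ρ+2*m)^2)) ≤ (1-ρ)*(1+m)*(1-y)^3/(3*ρ^4) :=
    final_bound2 hm hρ0 hρ1 hy1
  have hneg : (-X)/(2*m) = -(X/(2*m)) := by ring
  linarith only [hb1, h6, h4, hneg]
end

section
/- For every m > 0, ρ ∈ (0,1) and y ∈ (0,1), the derivative H'((m,ρ),y) = −(ρ/(2m(1−ρ)))·log( 1 + (2m/ρ)·((1−ρ)(y−1)) / ((1+2m/ρ)·(1−(1−ρ)y)) ) satisfies H'((m,ρ),y) ≥ (1−y) / ( (1+2m/ρ)·(1−(1−ρ)y) ) ≥ (1−y)/(1+2m/ρ). -/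
open Real Filter Set

/-- The formula for the derivative `H'((m,ρ),·)` in `y`. -/
noncomputable def Hderiv (m ρ y : ℝ) : ℝ :=
  -(ρ/(2*m*(1-ρ))) *
    Real.log (1 + (2*m/ρ) * ((1-ρ)*(y-1)) / ((1+2*m/ρ)*(1-(1-ρ)*y)))

theorem stmt9 (m ρ y : ℝ) (hm : 0 < m) (hρ : ρ ∈ Set.Ioo (0:ℝ) 1)
    (hy : y ∈ Set.Ioo (0:ℝ) 1) :
    (1-y)/(1+2*m/ρ) ≤ (1-y)/((1+2*m/ρ)*(1-(1-ρ)*y)) ∧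
    (1-y)/((1+2*m/ρ)*(1-(1-ρ)*y)) ≤ Hderiv m ρ y := by
  obtain ⟨hρ0, hρ1⟩ := hρ
  obtain ⟨hy0, hy1⟩ := hy
  have hs0 : 0 < 1 - ρ := by linarith
  have ha : 0 < 2*m/ρ := by positivity
  have hD : 0 < 1 - (1-ρ)*y := by nlinarith
  have h1a : 0 < 1 + 2*m/ρ := by linarith
  have hy' : 0 < 1 - y := by linarith
  set x : ℝ := (2*m/ρ) * ((1-ρ)*(y-1)) / ((1+2*m/ρ)*(1-(1-ρ)*y)) with hxdef
  have hρne : ρ ≠ 0 := ne_of_gt hρ0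
  have h1ane : (1+2*m/ρ) ≠ 0 := ne_of_gt h1a
  have hDne : (1-(1-ρ)*y) ≠ 0 := ne_of_gt hD
  have hx1 : 1 + x = (1 - (1-ρ)*y + 2*m) / ((1+2*m/ρ)*(1-(1-ρ)*y)) := by
    rw [hxdef]; field_simp; ring
  have hpos : 0 < 1 + x := by
    rw [hx1]
    apply div_pos (by nlinarith) (by positivity)
  have hlog : Real.log (1+x) ≤ x := by
    have := Real.log_le_sub_one_of_pos hpos
    linarith
  have hc : 0 < ρ/(2*m*(1-ρ)) := by positivity
  have hkey : -(ρ/(2*m*(1-ρ))) * x = (1-y)/((1+2*m/ρ)*(1-(1-ρ)*y)) := by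
    rw [hxdef]; field_simp; ring
  constructor
  · rw [div_le_div_iff₀ h1a (by positivity)]
    nlinarith [mul_nonneg (mul_nonneg hy'.le h1a.le) (mul_nonneg hs0.le hy0.le)]
  · have : -(ρ/(2*m*(1-ρ))) * x ≤ -(ρ/(2*m*(1-ρ))) * Real.log (1+x) := by
      nlinarith
    rw [hkey] at this
    exact this
end
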